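/- arXiv:2403.04779 — 2 statements merged into one kernel-verified Lean document; each statement's English description precedes it below -/
import Mathlib

section
/- With posterior Pr[H_i] = C(i,k)·C(N−i,n−k)/C(N+1,n+1) over the urn composition, the probability that a subsequent sample of n' balls drawn without replacement contains exactly k' black balls equals C(k+k', k)·C(n−k+n'−k', n−k) / C(n+n'+1, n+1). -/
/-!
By the subset-of-a-subset identity `C(m,p)·C(m−p,q) = C(p+q,p)·C(m,p+q)`, applied to the black and
to the white balls, the product of the likelihood of the second sample and the posterior weight of
`H_i` is `C(k+k',k)·C(n−k+n'−k',n−k)` times `C(i,k+k')·C(N−i,n+n'−k−k')`. Vandermonde's identity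
for upper indices sums the latter over `i` to `C(N+1,n+n'+1)`, and the denominators cancel since
`C(N+1,n+n'+1)·C(n+n'+1,n+1) = C(N+1,n+1)·C(N−n,n')`.
-/

open Finset

namespace Nat

theorem choose_mul_choose_sub (m p q : ℕ) :
    m.choose p * (m - p).choose q = (p + q).choose p * m.choose (p + q) := by
  rw [← add_tsub_cancel_left p q, ← choose_mul (le_add_right p q), add_tsub_cancel_left,
    mul_comm]

-- Vandermonde's identity for upper indices, by Pascal's rule on the second factor.
theorem sum_antidiagonal_choose_mul_choose (a : ℕ) :
    ∀ n b, ∑ p ∈ antidiagonal n, p.1.choose a * p.2.choose b = (n + 1).choose (a + b + 1)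
  | 0, b => by
    rcases a with _ | a <;> rcases b with _ | b <;> simp [choose_succ_succ, ← add_assoc]
  | n + 1, 0 => by
    have ih := sum_antidiagonal_choose_mul_choose a n 0
    simp only [choose_zero_right, mul_one, add_zero] at ih ⊢
    rw [Nat.sum_antidiagonal_succ', ih, choose_succ_succ' (n + 1)]
  | n + 1, b + 1 => by
    rw [Nat.sum_antidiagonal_succ', choose_zero_succ, mul_zero, zero_add]
    simp only [choose_succ_succ' _ b, mul_add, sum_add_distrib,
      sum_antidiagonal_choose_mul_choose a n]
    exact (choose_succ_succ' _ _).symm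

theorem sum_range_choose_mul_choose_sub (a b n : ℕ) :
    ∑ i ∈ range (n + 1), i.choose a * (n - i).choose b = (n + 1).choose (a + b + 1) := by
  rw [← sum_antidiagonal_choose_mul_choose, Nat.sum_antidiagonal_eq_sum_range_succ_mk]

theorem sum_range_choose_sub_mul_choose_sub_mul (N a b c d : ℕ) :
    ∑ i ∈ range (N + 1), (i - a).choose c * (N - i - b).choose d * (i.choose a * (N - i).choose b)
      = (a + c).choose a * (b + d).choose b * (N + 1).choose (a + c + (b + d) + 1) := by
  have term (i : ℕ) : (i - a).choose c * (N - i - b).choose d * (i.choose a * (N - i).choose b)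
      = (a + c).choose a * (b + d).choose b * (i.choose (a + c) * (N - i).choose (b + d)) := by
    calc _ = i.choose a * (i - a).choose c * ((N - i).choose b * (N - i - b).choose d) := by ring
      _ = _ := by rw [choose_mul_choose_sub, choose_mul_choose_sub]; ring
  simp_rw [term, ← mul_sum, sum_range_choose_mul_choose_sub]

end Nat

theorem posterior_predictive (N n k n' k' : ℕ) (hk : k ≤ n) (hk' : k' ≤ n')
    (hN : n + n' ≤ N) :
    ∑ i ∈ Finset.range (N + 1),
        (((i - k).choose k' * (N - i - (n - k)).choose (n' - k') : ℝ) / ((N - n).choose n')) *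
          ((i.choose k * (N - i).choose (n - k) : ℝ) / ((N + 1).choose (n + 1)))
      = ((k + k').choose k * (n - k + (n' - k')).choose (n - k) : ℝ) /
          ((n + n' + 1).choose (n + 1)) := by
  have hnum := Nat.sum_range_choose_sub_mul_choose_sub_mul N k (n - k) k' (n' - k')
  rw [show k + k' + (n - k + (n' - k')) = n + n' by omega] at hnum
  have hden : (N - n).choose n' * (N + 1).choose (n + 1)
      = (n + n' + 1).choose (n + 1) * (N + 1).choose (n + n' + 1) := by
    have := Nat.choose_mul (n := N + 1) (k := n + n' + 1) (s := n + 1) (by omega)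
    rw [show N + 1 - (n + 1) = N - n by omega, show n + n' + 1 - (n + 1) = n' by omega] at this
    rw [mul_comm, ← this, mul_comm]
  have hpos : ((N + 1).choose (n + n' + 1) : ℝ) ≠ 0 :=
    Nat.cast_ne_zero.2 (Nat.choose_pos (by omega)).ne'
  simp_rw [div_mul_div_comm, ← sum_div]
  norm_cast
  rw [hnum, hden]
  push_cast
  exact mul_div_mul_right _ _ hpos
end

section
/- If R has distribution Pr[R=r] = C(k+r, k)·C(n−k+m−r, n−k)/C(n+m+1, n+1) for r = 0, 1, …, m (with k ≤ n natural numbers), then E[R] = m·(k+1)/(n+2). -/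
/-!
Absorption, `r * C(k+r, k) = (k+1) * C(k+r, k+1)`, turns the numerator of `E[R]` into `k + 1`
times an upper-index Chu–Vandermonde sum, which equals `(k+1) * C(n+m+1, n+2)`; and
`C(n+m+1, n+2) / C(n+m+1, n+1) = m / (n+2)`. The upper-index Vandermonde identity is the
ordinary one in `ℤ` at negative upper arguments, because `C(-(a+1), i) = (-1)^i * C(a+i, a)`.
-/

open Finset

theorem Ring.choose_neg_natCast_add_one (a i : ℕ) :
    Ring.choose (-(a + 1 : ℤ)) i = (-1) ^ i * (a + i).choose a := by
  rw [Ring.choose_neg, show (a + 1 : ℤ) + i - 1 = ((a + i : ℕ) : ℤ) by push_cast; ring,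
    Ring.choose_natCast, Nat.choose_symm_add, Units.smul_def, Int.coe_negOnePow_natCast]
  simp

theorem Nat.sum_range_add_choose_mul_add_choose (a b M : ℕ) :
    ∑ i ∈ range (M + 1), (a + i).choose a * (b + (M - i)).choose b
      = (a + b + 1 + M).choose (a + b + 1) := by
  have h := Ring.add_choose_eq (r := -(a + 1 : ℤ)) (s := -(b + 1 : ℤ)) M (Commute.all _ _)
  rw [show -(a + 1 : ℤ) + -(b + 1) = -(((a + b + 1 : ℕ) : ℤ) + 1) by push_cast; ring,
    Ring.choose_neg_natCast_add_one] at h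
  have hterm : ∀ ij ∈ antidiagonal M,
      Ring.choose (-(a + 1 : ℤ)) ij.1 * Ring.choose (-(b + 1 : ℤ)) ij.2
        = (-1) ^ M * ((a + ij.1).choose a * (b + ij.2).choose b : ℕ) := by
    intro ij hij
    rw [Ring.choose_neg_natCast_add_one, Ring.choose_neg_natCast_add_one,
      ← mem_antidiagonal.mp hij]
    push_cast
    ring
  rw [sum_congr rfl hterm, ← mul_sum, Nat.sum_antidiagonal_eq_sum_range_succ_mk] at h
  exact_mod_cast (mul_right_injective₀ (by positivity : ((-1 : ℤ) ^ M) ≠ 0) h).symm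

theorem Nat.mul_add_choose_self (k r : ℕ) :
    r * (k + r).choose k = (k + 1) * (k + r).choose (k + 1) := by
  rw [mul_comm, mul_comm (k + 1), Nat.choose_succ_right_eq, Nat.add_sub_cancel_left]

theorem Nat.sum_range_mul_add_choose_mul_add_choose (k b m : ℕ) :
    ∑ r ∈ range (m + 1), r * ((k + r).choose k * (b + (m - r)).choose b)
      = (k + 1) * (k + b + 1 + m).choose (k + b + 2) := by
  simp_rw [← mul_assoc, Nat.mul_add_choose_self, mul_assoc, ← mul_sum]
  congr 1
  cases m with
  | zero => simp
  | succ M =>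
    rw [sum_range_succ', Nat.choose_eq_zero_of_lt (by omega : k + 0 < k + 1), zero_mul, add_zero]
    simp only [Nat.add_sub_add_right, ← add_assoc, add_right_comm k _ 1]
    rw [Nat.sum_range_add_choose_mul_add_choose]
    ring_nf

theorem beta_binomial_expectation (n k m : ℕ) (hk : k ≤ n) :
    ∑ r ∈ Finset.range (m + 1),
        (r : ℝ) * (((k + r).choose k * (n - k + (m - r)).choose (n - k) : ℝ) /
          ((n + m + 1).choose (n + 1)))
      = (m : ℝ) * ((k : ℝ) + 1) / ((n : ℝ) + 2) := by
  have hnum := Nat.sum_range_mul_add_choose_mul_add_choose k (n - k) m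
  rw [show k + (n - k) + 1 + m = n + m + 1 by omega, show k + (n - k) + 2 = n + 2 by omega] at hnum
  have hratio : (n + m + 1).choose (n + 2) * (n + 2) = (n + m + 1).choose (n + 1) * m := by
    simpa using Nat.choose_succ_right_eq (n + m + 1) (n + 1)
  have hD : ((n + m + 1).choose (n + 1) : ℝ) ≠ 0 := by
    exact_mod_cast (Nat.choose_pos (by omega)).ne'
  simp_rw [mul_div_assoc', ← sum_div]
  rw [div_eq_div_iff hD (by positivity)]
  exact_mod_cast show _ * (n + 2) = m * (k + 1) * _ by rw [hnum, mul_assoc, hratio]; ring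
end
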